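/- Let p be prime, n ≥ 1, X = ℤ/(pⁿ) × ℤ/(p) × ℤ/(pⁿ), and σ₀ = σ_{(0,0,0)}, where σ_{(a,b,c)}(x,y,z) = (x−c, y+π(a−x), z−δ_{a,x−c}δ_{b,y+π(a−x)}). Then (σ₀⁻¹)^{p^{n+1}} = id; in particular the order of σ₀ is a power of p. -/
import Mathlib


/-- The canonical projection `π : ℤ/(pⁿ) → ℤ/(p)`. -/
def projP (p n : ℕ) (x : ZMod (p ^ n)) : ZMod p := (x.val : ZMod p)

/-- `σ_{(a,b,c)}(x,y,z) = (x−c, y+π(a−x), z−δ_{a,x−c}·δ_{b,y+π(a−x)})`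
on `X = ℤ/(pⁿ) × ℤ/(p) × ℤ/(pⁿ)`, with the Kronecker deltas valued in `ℤ/(pⁿ)`. -/
def sigmaPN (p n : ℕ) (a q : ZMod (p ^ n) × ZMod p × ZMod (p ^ n)) :
    ZMod (p ^ n) × ZMod p × ZMod (p ^ n) :=
  (q.1 - a.2.2, q.2.1 + projP p n (a.1 - q.1),
    q.2.2 - (if a.1 = q.1 - a.2.2 then (1 : ZMod (p ^ n)) else 0) *
      (if a.2.1 = q.2.1 + projP p n (a.1 - q.1) then 1 else 0))

/-- `σ⁻¹_{(a,b,c)}(x,y,z) = (x+c, y+π(x+c−a), z+δ_{a,x}·δ_{b,y})`. -/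
def sigmaPNInv (p n : ℕ) (a q : ZMod (p ^ n) × ZMod p × ZMod (p ^ n)) :
    ZMod (p ^ n) × ZMod p × ZMod (p ^ n) :=
  (q.1 + a.2.2, q.2.1 + projP p n (q.1 + a.2.2 - a.1),
    q.2.2 + (if a.1 = q.1 then (1 : ZMod (p ^ n)) else 0) *
      (if a.2.1 = q.2.1 then 1 else 0))

section Aux

variable (p n : ℕ) (hp : p.Prime) (hn : 1 ≤ n)

lemma projP_eq_castHom (hp : p.Prime) (hn : 1 ≤ n) (x : ZMod (p ^ n)) :
    projP p n x = ZMod.castHom (dvd_pow_self p (Nat.one_le_iff_ne_zero.mp hn)) (ZMod p) x := by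
  haveI : NeZero (p ^ n) := ⟨pow_ne_zero _ hp.pos.ne'⟩
  simp [projP, ZMod.castHom_apply, ZMod.natCast_val]

lemma projP_add (hp : p.Prime) (hn : 1 ≤ n) (x y : ZMod (p ^ n)) :
    projP p n (x + y) = projP p n x + projP p n y := by
  rw [projP_eq_castHom p n hp hn, projP_eq_castHom p n hp hn, projP_eq_castHom p n hp hn,
    map_add]

lemma projP_zero (hp : p.Prime) (hn : 1 ≤ n) : projP p n (0 : ZMod (p ^ n)) = 0 := by
  simp [projP_eq_castHom p n hp hn]

lemma projP_neg (hp : p.Prime) (hn : 1 ≤ n) (x : ZMod (p ^ n)) :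
    projP p n (-x) = - projP p n x := by
  rw [projP_eq_castHom p n hp hn, projP_eq_castHom p n hp hn, map_neg]

lemma sigmaPNInv_iter (hp : p.Prime) (hn : 1 ≤ n) (m : ℕ)
    (q : ZMod (p ^ n) × ZMod p × ZMod (p ^ n)) :
    (sigmaPNInv p n (0, 0, 0))^[m] q =
      (q.1, q.2.1 + (m : ZMod p) * projP p n q.1,
        q.2.2 + (m : ZMod (p ^ n)) *
          ((if (0 : ZMod (p ^ n)) = q.1 then 1 else 0) *
            (if (0 : ZMod p) = q.2.1 then 1 else 0))) := by
  induction m with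
  | zero => simp
  | succ m ih =>
      rw [Function.iterate_succ_apply', ih]
      obtain ⟨x, y, z⟩ := q
      simp only [sigmaPNInv]
      by_cases hx : (0 : ZMod (p ^ n)) = x
      · subst hx
        have h0 : projP p n (0 : ZMod (p ^ n)) = 0 := projP_zero p n hp hn
        by_cases hy : (0 : ZMod p) = y
        · subst hy
          simp [h0]
          ring
        · simp [h0, hy]
      · have : ¬ (0 : ZMod (p ^ n)) = x + 0 := by simpa using hx
        simp only [if_neg hx, if_neg this, zero_mul, mul_zero, add_zero, Prod.mk.injEq]
        refine ⟨trivial, ?_, trivial⟩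
        push_cast
        ring

lemma sigmaPNInv_pow (hp : p.Prime) (hn : 1 ≤ n) :
    (sigmaPNInv p n (0, 0, 0))^[p ^ (n + 1)] = id := by
  funext q
  rw [sigmaPNInv_iter p n hp hn]
  have h1 : ((p ^ (n + 1) : ℕ) : ZMod p) = 0 := by
    push_cast
    simp [ZMod.natCast_self]
  have h2 : ((p ^ (n + 1) : ℕ) : ZMod (p ^ n)) = 0 := by
    have : ((p ^ n : ℕ) : ZMod (p ^ n)) = 0 := ZMod.natCast_self _
    rw [pow_succ]
    push_cast at this ⊢
    simp [this]
  simp [h1, h2]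

lemma sigmaPN_comp (hp : p.Prime) (hn : 1 ≤ n)
    (q : ZMod (p ^ n) × ZMod p × ZMod (p ^ n)) :
    sigmaPN p n (0, 0, 0) (sigmaPNInv p n (0, 0, 0) q) = q := by
  obtain ⟨x, y, z⟩ := q
  have hy2 : ∀ u : ZMod p,
      u + projP p n (x + 0 - 0) + projP p n (0 - (x + 0)) = u := by
    intro u
    rw [add_zero, sub_zero, zero_sub, projP_neg p n hp hn]
    ring
  have hy3 : ∀ u : ZMod p, u + projP p n x + projP p n (-x) = u := by
    intro u
    rw [projP_neg p n hp hn]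
    ring
  simp only [sigmaPN, sigmaPNInv, hy2, add_zero, sub_zero]
  simp [hy3]

end Aux

/-- `(σ₀⁻¹)^{p^{n+1}} = id`; in particular the order of `σ₀ = σ_{(0,0,0)}` is a power
of `p`. -/
theorem sigmaPN_zero_order (p n : ℕ) (hp : p.Prime) (hn : 1 ≤ n) :
    (sigmaPNInv p n (0, 0, 0))^[p ^ (n + 1)] = id ∧
    ∃ k : ℕ, (sigmaPN p n (0, 0, 0))^[p ^ k] = id := by
  have hN := sigmaPNInv_pow p n hp hn
  refine ⟨hN, n + 1, ?_⟩
  set f := sigmaPNInv p n (0, 0, 0)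
  set g := sigmaPN p n (0, 0, 0)
  have hgf : g ∘ f = id := funext (sigmaPN_comp p n hp hn)
  set N := p ^ (n + 1) with hNdef
  have hN1 : 1 ≤ N := Nat.one_le_iff_ne_zero.mpr (pow_ne_zero _ hp.pos.ne')
  have hg : g = f^[N - 1] := by
    have hsucc : N - 1 + 1 = N := Nat.sub_add_cancel hN1
    calc g = g ∘ f^[N] := by rw [hN]; rfl
    _ = g ∘ (f ∘ f^[N - 1]) := by
        conv_lhs => rw [← hsucc, Function.iterate_succ']
    _ = (g ∘ f) ∘ f^[N - 1] := rfl
    _ = f^[N - 1] := by rw [hgf]; rfl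
  rw [hg, ← Function.iterate_mul]
  have : (N - 1) * N = N * (N - 1) := Nat.mul_comm _ _
  rw [this, Function.iterate_mul, hN]
  simp
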